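/- arXiv:1109.2875 — 2 statements merged into one kernel-verified Lean document; each statement's English description precedes it below -/
import Mathlib

section
/- Let Γ be a bounded operator on H ⊕ H* of 1-pdm block form, Γ = [[γ, α],[JαJ, 1 + JγJ*]]. Then Γ is positive semi-definite if and only if the following three conditions hold: γ ≥ 0, α* = JαJ, and γ ≥ α J (1 + γ)^{-1} J* α* (as quadratic forms on H). -/
/- Setting: `H` is a complex separable Hilbert space, `H* = StrongDual ℂ H` its
topological dual with the canonical conjugate-linear isometry `J = InnerProductSpace.toDual`,
and `H ⊕ H*` is realized as `WithLp 2 (H × StrongDual ℂ H)`. -/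

noncomputable section

open scoped ComplexConjugate
open ContinuousLinearMap

local notation "⟪" x ", " y "⟫" => @inner ℂ _ _ x y

namespace BogoliubovSetup

variable {H : Type*} [NormedAddCommGroup H] [InnerProductSpace ℂ H] [CompleteSpace H]

/-- The inner product on the dual of a complex Hilbert space, transported through the canonical
conjugate-linear isometry `InnerProductSpace.toDual` (so that `J` is an anti-unitary). -/
instance dualInner : Inner ℂ (StrongDual ℂ H) :=
  ⟨fun f g => ⟪(InnerProductSpace.toDual ℂ H).symm g, (InnerProductSpace.toDual ℂ H).symm f⟫⟩

instance dualInnerProductSpace : InnerProductSpace ℂ (StrongDual ℂ H) where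
  norm_sq_eq_re_inner f := by
    rw [← (InnerProductSpace.toDual ℂ H).symm.norm_map f]
    exact (inner_self_eq_norm_sq _).symm
  conj_inner_symm x y := inner_conj_symm _ _
  add_left x y z := by
    change ⟪(InnerProductSpace.toDual ℂ H).symm z, (InnerProductSpace.toDual ℂ H).symm (x + y)⟫ = _
    rw [map_add, inner_add_right]
    rfl
  smul_left x y c := by
    change ⟪(InnerProductSpace.toDual ℂ H).symm y, (InnerProductSpace.toDual ℂ H).symm (c • x)⟫ = _
    rw [LinearIsometryEquiv.map_smulₛₗ, inner_smul_right]
    rfl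

/-- `H ⊕ H*` as a Hilbert space. -/
abbrev DSum (H : Type*) [NormedAddCommGroup H] [InnerProductSpace ℂ H] [CompleteSpace H] :=
  WithLp 2 (H × StrongDual ℂ H)

/-- The canonical conjugate-linear isometry `J : H → H*`, `J(x)(y) = ⟨x, y⟩`. -/
def Jmap : H →SL[starRingEnd ℂ] StrongDual ℂ H :=
  (InnerProductSpace.toDual ℂ H).toContinuousLinearEquiv.toContinuousLinearMap

/-- The inverse (= adjoint) `J⁻¹ = J* : H* → H`. -/
def Jinv : StrongDual ℂ H →SL[starRingEnd ℂ] H :=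
  (InnerProductSpace.toDual ℂ H).toContinuousLinearEquiv.symm.toContinuousLinearMap

/-- The element `f ⊕ φ` of `H ⊕ H*`. -/
def pair (f : H) (φ : StrongDual ℂ H) : DSum H :=
  (WithLp.equiv 2 (H × StrongDual ℂ H)).symm (f, φ)

/-- The block operator `[[A, B], [C, D]]` on `H ⊕ H*`. -/
def block (A : H →L[ℂ] H) (B : StrongDual ℂ H →L[ℂ] H)
    (C : H →L[ℂ] StrongDual ℂ H) (D : StrongDual ℂ H →L[ℂ] StrongDual ℂ H) :
    DSum H →L[ℂ] DSum H :=
  let e : DSum H ≃L[ℂ] H × StrongDual ℂ H :=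
    WithLp.prodContinuousLinearEquiv 2 ℂ H (StrongDual ℂ H)
  (e.symm : (H × StrongDual ℂ H) →L[ℂ] DSum H) ∘L
    (((A ∘L ContinuousLinearMap.fst ℂ H _) + (B ∘L ContinuousLinearMap.snd ℂ H _)).prod
      ((C ∘L ContinuousLinearMap.fst ℂ H _) + (D ∘L ContinuousLinearMap.snd ℂ H _))) ∘L
    (e : DSum H →L[ℂ] H × StrongDual ℂ H)

/-- The operator `JαJ : H → H*` built from `α : H* → H`. -/
def JalphaJ (α : StrongDual ℂ H →L[ℂ] H) : H →L[ℂ] StrongDual ℂ H :=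
  (Jmap.comp (α.comp (Jmap : H →SL[starRingEnd ℂ] StrongDual ℂ H)) :
    H →L[ℂ] StrongDual ℂ H)

/-- The operator `JγJ* : H* → H*` built from `γ : H → H`. -/
def JgammaJstar (γ : H →L[ℂ] H) : StrongDual ℂ H →L[ℂ] StrongDual ℂ H :=
  (Jmap.comp (γ.comp (Jinv : StrongDual ℂ H →SL[starRingEnd ℂ] H)) :
    StrongDual ℂ H →L[ℂ] StrongDual ℂ H)

/-- The block operator `Γ = [[γ, α], [JαJ, 1 + JγJ*]]` of 1-pdm form. -/
def pdmBlock (γ : H →L[ℂ] H) (α : StrongDual ℂ H →L[ℂ] H) : DSum H →L[ℂ] DSum H :=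
  block γ α (JalphaJ α) (1 + JgammaJstar γ)

/-- The operator `S = [[1, 0], [0, -1]]` on `H ⊕ H*`, `S(f ⊕ Jg) = f ⊕ (−Jg)`. -/
def Sop : DSum H →L[ℂ] DSum H := block 1 0 0 (-1)

/-- The conjugate-linear involution `𝒥(f ⊕ Jg) = g ⊕ Jf` on `H ⊕ H*`. -/
def scrJ : DSum H → DSum H := fun x =>
  pair (Jinv (WithLp.equiv 2 (H × StrongDual ℂ H) x).2)
    (Jmap (WithLp.equiv 2 (H × StrongDual ℂ H) x).1)

universe u

variable {E : Type*} [NormedAddCommGroup E] [InnerProductSpace ℂ E] [CompleteSpace E]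

/-- The positive square root of a (positive) operator, via the continuous functional calculus. -/
def opSqrt (T : E →L[ℂ] E) : E →L[ℂ] E := CFC.sqrt T

/-- The trace (in `[0, ∞]`) of an operator with respect to a Hilbert basis; for positive
operators this is independent of the chosen basis. -/
def trENN {ι : Type*} (b : HilbertBasis ι ℂ E) (T : E →L[ℂ] E) : ENNReal :=
  ∑' i, ENNReal.ofReal (Complex.re ⟪b i, T (b i)⟫)

/-- A (positive) operator is trace class if its trace is finite in every Hilbert basis. -/
def IsTraceClassPos {E : Type u} [NormedAddCommGroup E] [InnerProductSpace ℂ E]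
    [CompleteSpace E] (T : E →L[ℂ] E) : Prop :=
  ∀ ⦃ι : Type u⦄ (b : HilbertBasis ι ℂ E), trENN b T ≠ ⊤

/-- A Bogoliubov transformation: a bounded linear isomorphism `𝒱` of `H ⊕ H*` with
`𝒥𝒱𝒥 = 𝒱` and `𝒱*S𝒱 = S`. -/
def IsBogoliubov (𝒱 : DSum H →L[ℂ] DSum H) : Prop :=
  Function.Bijective 𝒱 ∧ (∀ x, scrJ (𝒱 (scrJ x)) = 𝒱 x) ∧
    (ContinuousLinearMap.adjoint 𝒱) ∘L Sop ∘L 𝒱 = Sop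

/-- The upper-right block `V : H* → H` of an operator on `H ⊕ H*`. -/
def blockUR (𝒱 : DSum H →L[ℂ] DSum H) : StrongDual ℂ H →L[ℂ] H :=
  (ContinuousLinearMap.fst ℂ H (StrongDual ℂ H) ∘L
      (WithLp.prodContinuousLinearEquiv 2 ℂ H (StrongDual ℂ H) :
        DSum H →L[ℂ] H × StrongDual ℂ H)) ∘L 𝒱 ∘L
    (((WithLp.prodContinuousLinearEquiv 2 ℂ H (StrongDual ℂ H)).symm :
        (H × StrongDual ℂ H) →L[ℂ] DSum H) ∘L
      ContinuousLinearMap.inr ℂ H (StrongDual ℂ H))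

/-- The Shale–Stinespring condition: `VV*` is trace class, where `V` is the
upper-right block of `𝒱`. -/
def ShaleStinespring (𝒱 : DSum H →L[ℂ] DSum H) : Prop :=
  IsTraceClassPos ((blockUR 𝒱) ∘L ContinuousLinearMap.adjoint (blockUR 𝒱))

/-- `Γ` is a 1-pdm: positive semi-definite of the block form `[[γ, α],[JαJ, 1 + JγJ*]]`
with `γ` trace class. -/
def Is1pdm (Γ : DSum H →L[ℂ] DSum H) : Prop :=
  ∃ (γ : H →L[ℂ] H) (α : StrongDual ℂ H →L[ℂ] H),
    Γ = pdmBlock γ α ∧ Γ.IsPositive ∧ IsTraceClassPos γ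

/-- `Tr[𝒜Γ] := Tr[𝒜^{1/2} Γ 𝒜^{1/2}] ∈ [0, ∞]`. -/
def trPair {ι : Type*} (b : HilbertBasis ι ℂ (DSum H)) (𝒜 Γ : DSum H →L[ℂ] DSum H) : ENNReal :=
  trENN b ((opSqrt 𝒜) ∘L Γ ∘L (opSqrt 𝒜))

/-- The diagonal block operator `[[d, 0],[0, JdJ*]]`. -/
def diagBlock (d : H →L[ℂ] H) : DSum H →L[ℂ] DSum H :=
  block d 0 0 (JgammaJstar d)

end BogoliubovSetup

/-!
Write the vectors of `H ⊕ H*` as `f ⊕ Jg`. Then `Γ` is self-adjoint exactly when `γ` is and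
`αJ` is symmetric in the sense `⟪g, αJf⟫ = ⟪f, αJg⟫`, which is `α* = JαJ`; in that case
`re ⟪Γ(f ⊕ Jg), f ⊕ Jg⟫ = re ⟪f, γf⟫ + 2 re ⟪g, αJf⟫ + re ⟪g, (1 + γ)g⟫`.
Positivity for `g = 0` gives `γ ≥ 0`, so `1 + γ` is invertible, and completing the square in `g`
shows that the form is nonnegative for all `g` iff `re ⟪(1 + γ)⁻¹αJf, αJf⟫ ≤ re ⟪f, γf⟫`,
the Schur complement condition `γ ≥ αJ(1 + γ)⁻¹J*α*`.
-/

section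

open RCLike

variable {𝕜 E : Type*} [RCLike 𝕜] [NormedAddCommGroup E] [InnerProductSpace 𝕜 E]

lemma re_inner_add_apply_add {A : E →L[𝕜] E} (hA : (A : E →ₗ[𝕜] E).IsSymmetric) {u h : E}
    (hu : A u = h) (g : E) :
    re (inner 𝕜 (g + u) (A (g + u))) =
      re (inner 𝕜 g (A g)) + 2 * re (inner 𝕜 g h) + re (inner 𝕜 u h) := by
  have hAu : re (inner 𝕜 u (A g)) = re (inner 𝕜 g h) := by
    have hAug : inner 𝕜 (A u) g = inner 𝕜 u (A g) := hA u g
    rw [← hAug, hu, inner_re_symm]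
  rw [map_add, hu, inner_add_left, inner_add_right, inner_add_right, map_add, map_add, map_add,
    hAu]
  ring

/-- The minimum over `g` is attained at `g = -u`. -/
lemma forall_nonneg_quadratic_iff {A : E →L[𝕜] E} (hA : A.IsPositive) {u h : E}
    (hu : A u = h) (c : ℝ) :
    (∀ g, 0 ≤ c + 2 * re (inner 𝕜 g h) + re (inner 𝕜 g (A g))) ↔ re (inner 𝕜 u h) ≤ c := by
  have hsq (g : E) : c + 2 * re (inner 𝕜 g h) + re (inner 𝕜 g (A g)) =
      c - re (inner 𝕜 u h) + re (inner 𝕜 (g + u) (A (g + u))) := by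
    rw [re_inner_add_apply_add hA.isSymmetric hu]
    ring
  constructor
  · intro hnonneg
    have := hnonneg (-u)
    rw [hsq, neg_add_cancel, map_zero, inner_zero_left, map_zero] at this
    linarith
  · intro hc g
    rw [hsq]
    linarith [hA.re_inner_nonneg_right (g + u)]

lemma apply_ringInverse_apply {T : E →L[𝕜] E} (hT : IsUnit T) (x : E) :
    T (Ring.inverse T x) = x :=
  DFunLike.congr_fun (Ring.mul_inverse_cancel T hT) x

end

namespace BogoliubovSetup

open RCLike

variable {H : Type*} [NormedAddCommGroup H] [InnerProductSpace ℂ H] [CompleteSpace H]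

lemma Jinv_Jmap (f : H) : Jinv (Jmap f) = f :=
  (InnerProductSpace.toDual ℂ H).symm_apply_apply f

lemma Jmap_Jinv (φ : StrongDual ℂ H) : Jmap (Jinv φ) = φ :=
  (InnerProductSpace.toDual ℂ H).apply_symm_apply φ

lemma inner_Jmap_Jmap (f g : H) : ⟪Jmap f, Jmap g⟫ = ⟪g, f⟫ := by
  change ⟪Jinv (Jmap g), Jinv (Jmap f)⟫ = _
  rw [Jinv_Jmap, Jinv_Jmap]

lemma forall_pair_Jmap {P : DSum H → Prop} : (∀ x, P x) ↔ ∀ f g : H, P (pair f (Jmap g)) := by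
  refine ⟨fun h f g => h _, fun h x => ?_⟩
  have hx : pair (WithLp.equiv 2 _ x).1 (Jmap (Jinv (WithLp.equiv 2 _ x).2)) = x := by
    rw [Jmap_Jinv]
    exact (WithLp.equiv 2 _).symm_apply_apply x
  exact hx ▸ h _ _

lemma inner_pair_Jmap (f g f' g' : H) :
    ⟪pair f (Jmap g), pair f' (Jmap g')⟫ = ⟪f, f'⟫ + ⟪g', g⟫ := by
  change ⟪f, f'⟫ + ⟪Jmap g, Jmap g'⟫ = _
  rw [inner_Jmap_Jmap]

variable (γ : H →L[ℂ] H) (α : StrongDual ℂ H →L[ℂ] H)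

lemma pdmBlock_apply_pair_Jmap (f g : H) :
    pdmBlock γ α (pair f (Jmap g)) =
      pair (γ f + α (Jmap g)) (Jmap (α (Jmap f) + (1 + γ) g)) := by
  change pair (γ f + α (Jmap g)) (Jmap (α (Jmap f)) + (Jmap g + Jmap (γ (Jinv (Jmap g))))) = _
  rw [Jinv_Jmap, add_apply, one_apply_eq_self, map_add, map_add]

lemma adjoint_eq_JalphaJ_iff :
    adjoint α = JalphaJ α ↔ ∀ f g : H, ⟪g, α (Jmap f)⟫ = ⟪f, α (Jmap g)⟫ := by
  constructor
  · intro h f g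
    have := adjoint_inner_left α (Jmap g) f
    rwa [h, JalphaJ, coe_comp, Function.comp_apply, inner_Jmap_Jmap] at this
  · intro h
    ext1 f
    refine ext_inner_right ℂ fun φ => ?_
    rw [adjoint_inner_left, ← Jmap_Jinv φ]
    exact (h f (Jinv φ)).symm.trans (inner_Jmap_Jmap _ _).symm

lemma isSelfAdjoint_pdmBlock_iff :
    IsSelfAdjoint (pdmBlock γ α) ↔ IsSelfAdjoint γ ∧ adjoint α = JalphaJ α := by
  simp only [isSelfAdjoint_iff_isSymmetric, adjoint_eq_JalphaJ_iff, LinearMap.IsSymmetric,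
    coe_coe]
  constructor
  · intro h
    refine ⟨fun f f' => ?_, fun f g => ?_⟩
    · have := h (pair f (Jmap 0)) (pair f' (Jmap 0))
      rw [pdmBlock_apply_pair_Jmap, pdmBlock_apply_pair_Jmap, inner_pair_Jmap,
        inner_pair_Jmap] at this
      simpa using this
    · have := h (pair f (Jmap 0)) (pair 0 (Jmap g))
      rw [pdmBlock_apply_pair_Jmap, pdmBlock_apply_pair_Jmap, inner_pair_Jmap,
        inner_pair_Jmap] at this
      simpa using this
  · rintro ⟨hγ, hα⟩
    have hα' (a b : H) : ⟪α (Jmap a), b⟫ = ⟪α (Jmap b), a⟫ := by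
      rw [← inner_conj_symm, hα, inner_conj_symm]
    rw [forall_pair_Jmap]
    intro f g
    rw [forall_pair_Jmap]
    intro f' g'
    simp only [pdmBlock_apply_pair_Jmap, inner_pair_Jmap, inner_add_left, inner_add_right,
      add_apply, one_apply_eq_self]
    rw [hγ f f', hγ g' g, hα' g f', hα f g']
    ring

lemma re_inner_pdmBlock_apply_pair_Jmap (hα : adjoint α = JalphaJ α) (f g : H) :
    re ⟪pdmBlock γ α (pair f (Jmap g)), pair f (Jmap g)⟫ =
      re ⟪f, γ f⟫ + 2 * re ⟪g, α (Jmap f)⟫ + re ⟪g, (1 + γ) g⟫ := by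
  have hαfg : re ⟪α (Jmap g), f⟫ = re ⟪g, α (Jmap f)⟫ := by
    rw [inner_re_symm, (adjoint_eq_JalphaJ_iff α).mp hα]
  rw [pdmBlock_apply_pair_Jmap, inner_pair_Jmap, inner_add_left, inner_add_right,
    map_add, map_add, map_add, hαfg, inner_re_symm (γ f)]
  ring

lemma re_inner_schur_apply (hα : adjoint α = JalphaJ α) (f : H) :
    re ⟪f, (α ∘L (Jmap.comp ((Ring.inverse (1 + γ)).comp
        (Jinv.comp (adjoint α))) : H →L[ℂ] StrongDual ℂ H)) f⟫ =
      re ⟪Ring.inverse (1 + γ) (α (Jmap f)), α (Jmap f)⟫ := by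
  change re ⟪f, α (Jmap (Ring.inverse (1 + γ) (Jinv (adjoint α f))))⟫ = _
  rw [hα]
  change re ⟪f, α (Jmap (Ring.inverse (1 + γ) (Jinv (Jmap (α (Jmap f))))))⟫ = _
  rw [Jinv_Jmap, ← (adjoint_eq_JalphaJ_iff α).mp hα]

lemma forall_nonneg_re_inner_pdmBlock_iff (hγ : γ.IsPositive) (hα : adjoint α = JalphaJ α)
    (f : H) :
    (∀ g, 0 ≤ re ⟪pdmBlock γ α (pair f (Jmap g)), pair f (Jmap g)⟫) ↔
      re ⟪Ring.inverse (1 + γ) (α (Jmap f)), α (Jmap f)⟫ ≤ re ⟪f, γ f⟫ := by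
  have hunit : IsUnit (1 + γ) :=
    (isStrictlyPositive_one.add_nonneg ((nonneg_iff_isPositive γ).mpr hγ)).isUnit
  simp only [re_inner_pdmBlock_apply_pair_Jmap γ α hα]
  exact forall_nonneg_quadratic_iff (isPositive_one.add hγ) (apply_ringInverse_apply hunit _) _

end BogoliubovSetup

open BogoliubovSetup ContinuousLinearMap

universe u

theorem pdmBlock_isPositive_iff_general {H : Type u} [NormedAddCommGroup H] [InnerProductSpace ℂ H]
    [CompleteSpace H]
    (γ : H →L[ℂ] H) (α : StrongDual ℂ H →L[ℂ] H) :
    (pdmBlock γ α).IsPositive ↔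
      γ.IsPositive ∧ ContinuousLinearMap.adjoint α = JalphaJ α ∧
        ∀ f : H,
          Complex.re ⟪f, (α ∘L (Jmap.comp ((Ring.inverse (1 + γ)).comp
              (Jinv.comp (ContinuousLinearMap.adjoint α))) : H →L[ℂ] StrongDual ℂ H)) f⟫
            ≤ Complex.re ⟪f, γ f⟫ := by
  rw [isPositive_def', isSelfAdjoint_pdmBlock_iff, forall_pair_Jmap]
  simp only [reApplyInnerSelf_apply, ← RCLike.re_to_complex]
  constructor
  · rintro ⟨⟨hγ, hα⟩, hpos⟩
    have hγpos : γ.IsPositive := by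
      refine isPositive_def'.mpr ⟨hγ, fun f => ?_⟩
      have := hpos f 0
      rw [re_inner_pdmBlock_apply_pair_Jmap γ α hα] at this
      simpa [reApplyInnerSelf_apply, inner_re_symm (γ f)] using this
    refine ⟨hγpos, hα, fun f => ?_⟩
    rw [re_inner_schur_apply γ α hα]
    exact (forall_nonneg_re_inner_pdmBlock_iff γ α hγpos hα f).mp (hpos f)
  · rintro ⟨hγpos, hα, hschur⟩
    refine ⟨⟨hγpos.isSelfAdjoint, hα⟩, fun f => ?_⟩
    rw [forall_nonneg_re_inner_pdmBlock_iff γ α hγpos hα f, ← re_inner_schur_apply γ α hα]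
    exact hschur f

/-- Let `Γ` be a bounded operator on `H ⊕ H*` of 1-pdm block form,
`Γ = [[γ, α],[JαJ, 1 + JγJ*]]`.  Then `Γ` is positive semi-definite if and only if
`γ ≥ 0`, `α* = JαJ`, and `γ ≥ α J (1 + γ)⁻¹ J* α*` as quadratic forms on `H`. -/
theorem pdmBlock_isPositive_iff {H : Type u} [NormedAddCommGroup H] [InnerProductSpace ℂ H]
    [CompleteSpace H] [TopologicalSpace.SeparableSpace H]
    (γ : H →L[ℂ] H) (α : StrongDual ℂ H →L[ℂ] H) :
    (pdmBlock γ α).IsPositive ↔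
      γ.IsPositive ∧ ContinuousLinearMap.adjoint α = JalphaJ α ∧
        ∀ f : H,
          Complex.re ⟪f, (α ∘L (Jmap.comp ((Ring.inverse (1 + γ)).comp
              (Jinv.comp (ContinuousLinearMap.adjoint α))) : H →L[ℂ] StrongDual ℂ H)) f⟫
            ≤ Complex.re ⟪f, γ f⟫ :=
  pdmBlock_isPositive_iff_general γ α

end
end

section
/- Let Γ = [[γ, α],[JαJ, 1 + JγJ*]] be of 1-pdm block form with Γ ≥ 0 and γ trace class. Then αα* is trace class on H; in fact αα* ≤ (1 + ‖γ‖)·γ as quadratic forms, so that Tr(αα*) ≤ (1 + ‖γ‖)·Tr(γ). In particular α is a Hilbert–Schmidt operator. -/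
/- Setting: `H` is a complex separable Hilbert space, `H* = StrongDual ℂ H` its
topological dual with the canonical conjugate-linear isometry `J = InnerProductSpace.toDual`,
and `H ⊕ H*` is realized as `WithLp 2 (H × StrongDual ℂ H)`. -/

noncomputable section

open scoped ComplexConjugate
open ContinuousLinearMap

local notation "⟪" x ", " y "⟫" => @inner ℂ _ _ x y

open BogoliubovSetup ContinuousLinearMap

universe u

/-! Testing `Γ ≥ 0` on `f ⊕ φ` and bounding the lower-right block by `1 + ‖γ‖` gives a quadratic
inequality in `φ`; at its minimizer `φ = -(1 + ‖γ‖)⁻¹ α* f` it reads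
`‖α* f‖² ≤ (1 + ‖γ‖) ⟨f, γ f⟩`. Summing over a Hilbert basis gives the trace bound, and
`Tr(α*α) = Tr(αα*)` by Parseval's identity and exchanging the resulting double sum. -/

namespace BogoliubovSetup

section HilbertSpace

variable {E F : Type*} [NormedAddCommGroup E] [InnerProductSpace ℂ E]
  [NormedAddCommGroup F] [InnerProductSpace ℂ F]

lemma sq_norm_le_of_forall_quadratic_nonneg (v : F) {a c : ℝ} (hc : 0 < c)
    (h : ∀ φ : F, 0 ≤ a + 2 * Complex.re ⟪v, φ⟫ + c * ‖φ‖ ^ 2) : ‖v‖ ^ 2 ≤ c * a := by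
  have hmin := h (((-c⁻¹ : ℝ) : ℂ) • v)
  rw [inner_smul_right, Complex.re_ofReal_mul, ← RCLike.re_to_complex, inner_self_eq_norm_sq,
    norm_smul, Complex.norm_real, Real.norm_eq_abs, abs_neg, abs_of_pos (inv_pos.mpr hc)] at hmin
  have hscaled := mul_nonneg hc.le hmin
  field_simp at hscaled
  linarith

lemma tsum_ofReal_sq_norm_inner {ι : Type*} (b : HilbertBasis ι ℂ E) (x : E) :
    ∑' i, ENNReal.ofReal (‖⟪b i, x⟫‖ ^ 2) = ENNReal.ofReal (‖x‖ ^ 2) := by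
  have hsum : HasSum (fun i => ‖⟪b i, x⟫‖ ^ 2) (‖x‖ ^ 2) := by
    have := (b.hasSum_inner_mul_inner x x).mapL Complex.reCLM
    simp only [Complex.reCLM_apply, ← inner_conj_symm x (b _), Complex.conj_mul',
      inner_self_eq_norm_sq_to_K] at this
    exact_mod_cast this
  rw [← ENNReal.ofReal_tsum_of_nonneg (fun _ => sq_nonneg _) hsum.summable, hsum.tsum_eq]

lemma trENN_le_ofReal_mul {ι : Type*} (b : HilbertBasis ι ℂ E) {T S : E →L[ℂ] E} {c : ℝ}
    (hc : 0 ≤ c) (h : ∀ f, Complex.re ⟪f, T f⟫ ≤ c * Complex.re ⟪f, S f⟫) :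
    trENN b T ≤ ENNReal.ofReal c * trENN b S := by
  rw [trENN, trENN, ← ENNReal.tsum_mul_left]
  refine ENNReal.tsum_le_tsum fun i => ?_
  rw [← ENNReal.ofReal_mul hc]
  exact ENNReal.ofReal_le_ofReal (h _)

variable [CompleteSpace E] [CompleteSpace F]

lemma trENN_adjoint_comp_self {ι : Type*} (b : HilbertBasis ι ℂ E) (B : E →L[ℂ] F) :
    trENN b (adjoint B ∘L B) = ∑' i, ENNReal.ofReal (‖B (b i)‖ ^ 2) := by
  simp only [trENN, apply_norm_sq_eq_inner_adjoint_right B]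
  rfl

lemma tsum_ofReal_sq_norm_apply_eq_adjoint {ι κ : Type*} (b : HilbertBasis ι ℂ E)
    (c : HilbertBasis κ ℂ F) (B : E →L[ℂ] F) :
    ∑' i, ENNReal.ofReal (‖B (b i)‖ ^ 2) = ∑' j, ENNReal.ofReal (‖adjoint B (c j)‖ ^ 2) :=
  calc ∑' i, ENNReal.ofReal (‖B (b i)‖ ^ 2)
      = ∑' i, ∑' j, ENNReal.ofReal (‖⟪c j, B (b i)⟫‖ ^ 2) := by
        simp only [tsum_ofReal_sq_norm_inner]
    _ = ∑' j, ∑' i, ENNReal.ofReal (‖⟪b i, adjoint B (c j)⟫‖ ^ 2) := by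
        rw [ENNReal.tsum_comm]
        simp only [← adjoint_inner_left B, norm_inner_symm]
    _ = ∑' j, ENNReal.ofReal (‖adjoint B (c j)‖ ^ 2) := by
        simp only [tsum_ofReal_sq_norm_inner]

lemma trENN_adjoint_comp_self_eq_comp_adjoint {ι κ : Type*} (b : HilbertBasis ι ℂ E)
    (c : HilbertBasis κ ℂ F) (B : E →L[ℂ] F) :
    trENN b (adjoint B ∘L B) = trENN c (B ∘L adjoint B) := by
  have hc := trENN_adjoint_comp_self c (adjoint B)
  rw [adjoint_adjoint] at hc
  rw [hc, trENN_adjoint_comp_self, tsum_ofReal_sq_norm_apply_eq_adjoint b c]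

end HilbertSpace

lemma IsTraceClassPos.adjoint_comp_self {E F : Type u} [NormedAddCommGroup E]
    [InnerProductSpace ℂ E] [CompleteSpace E] [NormedAddCommGroup F] [InnerProductSpace ℂ F]
    [CompleteSpace F] {B : E →L[ℂ] F} (h : IsTraceClassPos (B ∘L adjoint B)) :
    IsTraceClassPos (adjoint B ∘L B) := fun _ b => by
  obtain ⟨_, c, -⟩ := exists_hilbertBasis ℂ F
  rw [trENN_adjoint_comp_self_eq_comp_adjoint b c]
  exact h c

section PdmBlock

variable {H : Type*} [NormedAddCommGroup H] [InnerProductSpace ℂ H] [CompleteSpace H]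

lemma inner_pair_pair (f g : H) (φ ψ : StrongDual ℂ H) :
    ⟪pair f φ, pair g ψ⟫ = ⟪f, g⟫ + ⟪φ, ψ⟫ := rfl

lemma pdmBlock_apply_pair (γ : H →L[ℂ] H) (α : StrongDual ℂ H →L[ℂ] H)
    (f : H) (φ : StrongDual ℂ H) :
    pdmBlock γ α (pair f φ) = pair (γ f + α φ) (JalphaJ α f + (φ + JgammaJstar γ φ)) := rfl

lemma inner_JalphaJ_of_isSelfAdjoint {γ : H →L[ℂ] H} {α : StrongDual ℂ H →L[ℂ] H}
    (hsa : IsSelfAdjoint (pdmBlock γ α)) (f : H) (φ : StrongDual ℂ H) :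
    ⟪JalphaJ α f, φ⟫ = ⟪f, α φ⟫ := by
  have h := hsa.isSymmetric (pair f 0) (pair 0 φ)
  simp only [coe_coe] at h
  rw [pdmBlock_apply_pair, pdmBlock_apply_pair, inner_pair_pair, inner_pair_pair] at h
  simpa using h

lemma re_inner_JgammaJstar_le (γ : H →L[ℂ] H) (φ : StrongDual ℂ H) :
    Complex.re ⟪φ, JgammaJstar γ φ⟫ ≤ ‖γ‖ * ‖φ‖ ^ 2 := by
  set g := (InnerProductSpace.toDual ℂ H).symm φ
  have hg : ‖g‖ = ‖φ‖ := LinearIsometryEquiv.norm_map _ _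
  have hJ : ⟪φ, JgammaJstar γ φ⟫ = ⟪γ g, g⟫ := by
    show ⟪(InnerProductSpace.toDual ℂ H).symm (InnerProductSpace.toDual ℂ H (γ g)), g⟫ = _
    rw [LinearIsometryEquiv.symm_apply_apply]
  calc Complex.re ⟪φ, JgammaJstar γ φ⟫ = Complex.re ⟪γ g, g⟫ := by rw [hJ]
    _ ≤ ‖γ g‖ * ‖g‖ := re_inner_le_norm (𝕜 := ℂ) _ _
    _ ≤ ‖γ‖ * ‖g‖ * ‖g‖ := by gcongr; exact γ.le_opNorm g
    _ = ‖γ‖ * ‖φ‖ ^ 2 := by rw [hg]; ring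

lemma re_inner_pdmBlock_pair {γ : H →L[ℂ] H} {α : StrongDual ℂ H →L[ℂ] H}
    (hsa : IsSelfAdjoint (pdmBlock γ α)) (f : H) (φ : StrongDual ℂ H) :
    Complex.re ⟪pair f φ, pdmBlock γ α (pair f φ)⟫ =
      Complex.re ⟪f, γ f⟫ + 2 * Complex.re ⟪adjoint α f, φ⟫ + ‖φ‖ ^ 2
        + Complex.re ⟪φ, JgammaJstar γ φ⟫ := by
  have hcross : ⟪φ, JalphaJ α f⟫ = conj ⟪adjoint α f, φ⟫ := by
    rw [← inner_conj_symm (x := φ), inner_JalphaJ_of_isSelfAdjoint hsa, adjoint_inner_left]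
  rw [pdmBlock_apply_pair, inner_pair_pair, inner_add_right, inner_add_right, inner_add_right,
    hcross, ← adjoint_inner_left α]
  have hφ : Complex.re ⟪φ, φ⟫ = ‖φ‖ ^ 2 := inner_self_eq_norm_sq (𝕜 := ℂ) φ
  simp only [Complex.add_re, Complex.conj_re, hφ]
  ring

lemma sq_norm_adjoint_le_of_isPositive_pdmBlock {γ : H →L[ℂ] H} {α : StrongDual ℂ H →L[ℂ] H}
    (hpos : (pdmBlock γ α).IsPositive) (f : H) :
    ‖adjoint α f‖ ^ 2 ≤ (1 + ‖γ‖) * Complex.re ⟪f, γ f⟫ := by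
  refine sq_norm_le_of_forall_quadratic_nonneg _ (by positivity) fun φ => ?_
  have hΓ := hpos.re_inner_nonneg_right (pair f φ)
  rw [RCLike.re_to_complex, re_inner_pdmBlock_pair hpos.isSelfAdjoint] at hΓ
  linarith [re_inner_JgammaJstar_le γ φ]

end PdmBlock

end BogoliubovSetup

theorem alphaAlphaStar_traceClass_general {H : Type u} [NormedAddCommGroup H] [InnerProductSpace ℂ H]
    [CompleteSpace H]
    (γ : H →L[ℂ] H) (α : StrongDual ℂ H →L[ℂ] H)
    (hpos : (pdmBlock γ α).IsPositive) (htr : IsTraceClassPos γ) :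
    (∀ f : H,
        Complex.re ⟪f, (α ∘L ContinuousLinearMap.adjoint α) f⟫ ≤ (1 + ‖γ‖) * Complex.re ⟪f, γ f⟫)
    ∧ (∀ ⦃ι : Type u⦄ (b : HilbertBasis ι ℂ H),
        trENN b (α ∘L ContinuousLinearMap.adjoint α) ≤ ENNReal.ofReal (1 + ‖γ‖) * trENN b γ)
    ∧ IsTraceClassPos (α ∘L ContinuousLinearMap.adjoint α)
    ∧ IsTraceClassPos (ContinuousLinearMap.adjoint α ∘L α) := by
  have hform : ∀ f : H,
      Complex.re ⟪f, (α ∘L adjoint α) f⟫ ≤ (1 + ‖γ‖) * Complex.re ⟪f, γ f⟫ := fun f => by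
    have hnorm := apply_norm_sq_eq_inner_adjoint_right (adjoint α) f
    rw [adjoint_adjoint, RCLike.re_to_complex] at hnorm
    rw [← hnorm]
    exact sq_norm_adjoint_le_of_isPositive_pdmBlock hpos f
  have htrace : ∀ ⦃ι : Type u⦄ (b : HilbertBasis ι ℂ H),
      trENN b (α ∘L adjoint α) ≤ ENNReal.ofReal (1 + ‖γ‖) * trENN b γ :=
    fun _ b => trENN_le_ofReal_mul b (by positivity) hform
  have hαα : IsTraceClassPos (α ∘L adjoint α) := fun _ b =>
    ne_top_of_le_ne_top (ENNReal.mul_ne_top ENNReal.ofReal_ne_top (htr b)) (htrace b)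
  exact ⟨hform, htrace, hαα, hαα.adjoint_comp_self⟩

/-- Let `Γ = [[γ, α],[JαJ, 1 + JγJ*]]` be of 1-pdm block form with `Γ ≥ 0`
and `γ` trace class.  Then `αα* ≤ (1 + ‖γ‖)·γ` as quadratic forms, so that
`Tr(αα*) ≤ (1 + ‖γ‖)·Tr(γ)`; in particular `αα*` is trace class on `H` and `α` is a
Hilbert–Schmidt operator (i.e. `α*α` is trace class as well). -/
theorem alphaAlphaStar_traceClass {H : Type u} [NormedAddCommGroup H] [InnerProductSpace ℂ H]
    [CompleteSpace H] [TopologicalSpace.SeparableSpace H]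
    (γ : H →L[ℂ] H) (α : StrongDual ℂ H →L[ℂ] H)
    (hpos : (pdmBlock γ α).IsPositive) (htr : IsTraceClassPos γ) :
    (∀ f : H,
        Complex.re ⟪f, (α ∘L ContinuousLinearMap.adjoint α) f⟫ ≤ (1 + ‖γ‖) * Complex.re ⟪f, γ f⟫)
    ∧ (∀ ⦃ι : Type u⦄ (b : HilbertBasis ι ℂ H),
        trENN b (α ∘L ContinuousLinearMap.adjoint α) ≤ ENNReal.ofReal (1 + ‖γ‖) * trENN b γ)
    ∧ IsTraceClassPos (α ∘L ContinuousLinearMap.adjoint α)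
    ∧ IsTraceClassPos (ContinuousLinearMap.adjoint α ∘L α) :=
  alphaAlphaStar_traceClass_general γ α hpos htr
end
end
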